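/- arXiv:2401.05402 — 6 statements merged into one kernel-verified Lean document; each statement's English description precedes it below -/
import Mathlib

section
/- Let μ : ℝ, v > 0, and let f : ℝ → ℝ be the Gaussian density f(x) = (1/√(2πv)) · exp(-(x-μ)²/(2v)). Then for every integer n, the n-th Fourier coefficient of the periodization of f equals the Fourier transform of f at n: ∫_{x ∈ [0,1)} (∑_{τ : ℤ} f(x + τ)) · exp(-2πi n x) dx = exp(-2πi n μ) · exp(-2π² n² v). -/
open MeasureTheory Real Set Complex Filter Asymptotics ContinuousMap
open scoped FourierTransform

/-- The `n`-th Fourier coefficient of the periodization of the Gaussian density with mean `μ`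
and variance `v` equals the Fourier transform of the density at `n`. -/
theorem fourier_coeff_periodized_gaussian (μ v : ℝ) (hv : 0 < v) (n : ℤ) :
    ∫ x in Set.Ico (0 : ℝ) 1,
      ((∑' τ : ℤ, (1 / Real.sqrt (2 * π * v)) * Real.exp (-(x + τ - μ) ^ 2 / (2 * v)) : ℝ) : ℂ)
        * Complex.exp (-2 * π * Complex.I * n * x)
    = Complex.exp (-2 * π * Complex.I * n * μ) * Complex.exp (-2 * π ^ 2 * n ^ 2 * v) := by
  have hv' : (v : ℂ) ≠ 0 := by exact_mod_cast hv.ne'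
  set F : C(ℝ, ℂ) := ⟨fun x => ((1 / Real.sqrt (2 * π * v)) * Real.exp (-(x - μ) ^ 2 / (2 * v)) : ℝ),
    by continuity⟩ with hF
  set a : ℂ := -(1 / (2 * v)) with ha_def
  have ha : a.re < 0 := by
    have h : a = ((-(1 / (2 * v)) : ℝ) : ℂ) := by rw [ha_def]; push_cast; ring
    rw [h, Complex.ofReal_re]
    have : (0:ℝ) < 1 / (2 * v) := by positivity
    linarith
  set C : ℂ := (1 / Real.sqrt (2 * π * v) : ℝ) * Complex.exp (-(μ^2) / (2*v)) with hC_def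
  have hF_eq : ∀ x : ℝ, F x = C * Complex.exp (a * x ^ 2 + (μ/v) * x) := by
    intro x
    have hexp : Complex.exp (-((x:ℂ) - μ) ^ 2 / (2 * v)) =
        Complex.exp (-(μ:ℂ) ^ 2 / (2 * v)) * Complex.exp (-(1 / (2 * (v:ℂ))) * x ^ 2 + ((μ:ℂ)/v) * x) := by
      rw [← Complex.exp_add]
      congr 1
      field_simp
      ring
    rw [hF, ContinuousMap.coe_mk, hC_def, ha_def]
    push_cast
    rw [hexp]
    ring
  -- decay
  have hdecay : (F : ℝ → ℂ) =O[cocompact ℝ] (|·| ^ (-2 : ℝ)) := by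
    have := (cexp_neg_quadratic_isLittleO_abs_rpow_cocompact ha ((μ:ℂ)/v) (-2)).isBigO.const_mul_left C
    refine this.congr_left fun x => (hF_eq x).symm
  have hK : ∀ K : TopologicalSpace.Compacts ℝ,
      Summable fun m : ℤ => ‖(F.comp (ContinuousMap.addRight m)).restrict K‖ := fun K =>
    summable_of_isBigO (Real.summable_abs_int_rpow one_lt_two)
      ((isBigO_norm_restrict_cocompact F two_pos hdecay K).comp_tendsto Int.tendsto_coe_cofinite)
  have key := Real.fourierCoeff_tsum_comp_add hK n
  -- identify LHS
  have hLHS : fourierCoeff (Function.Periodic.lift <| F.periodic_tsum_comp_add_zsmul 1) n =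
      ∫ x in Set.Ico (0 : ℝ) 1,
        ((∑' τ : ℤ, (1 / Real.sqrt (2 * π * v)) * Real.exp (-(x + τ - μ) ^ 2 / (2 * v)) : ℝ) : ℂ)
          * Complex.exp (-2 * π * Complex.I * n * x) := by
    rw [fourierCoeff_eq_intervalIntegral _ n 0, zero_add, div_one, one_smul,
      intervalIntegral.integral_of_le zero_le_one, MeasureTheory.integral_Ioc_eq_integral_Ioo, ← MeasureTheory.integral_Ico_eq_integral_Ioo]
    refine setIntegral_congr_fun measurableSet_Ico fun x _ => ?_
    rw [Function.Periodic.lift_coe]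
    simp only [zsmul_one]
    rw [← ContinuousMap.tsum_apply (summable_of_locally_summable_norm hK) x]
    rw [Complex.ofReal_tsum]
    simp only [ContinuousMap.comp_apply, ContinuousMap.coe_addRight, zsmul_one, hF,
      ContinuousMap.coe_mk, fourier_coe_apply, smul_eq_mul]
    rw [mul_comm]
    congr 2
    · push_cast
      ring
  -- compute Fourier integral
  have hRHS : 𝓕 (F : ℝ → ℂ) n =
      Complex.exp (-2 * π * Complex.I * n * μ) * Complex.exp (-2 * π ^ 2 * n ^ 2 * v) := by
    rw [Real.fourier_real_eq_integral_exp_smul]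
    have h1 : ∀ x : ℝ, Complex.exp (↑(-2 * π * x * (n:ℝ)) * Complex.I) • F x =
        C * Complex.exp (a * x ^ 2 + ((μ:ℂ)/v + (-2 * π * n) * Complex.I) * x + 0) := by
      intro x
      rw [smul_eq_mul, hF_eq x, mul_comm, mul_assoc, ← Complex.exp_add]
      congr 2
      push_cast
      ring
    simp_rw [h1]
    rw [MeasureTheory.integral_const_mul, integral_cexp_quadratic ha]
    have hsq : ((π : ℂ) / -a) ^ (1 / 2 : ℂ) = (Real.sqrt (2 * π * v) : ℂ) := by
      have h2 : (π : ℂ) / -a = ((2 * π * v : ℝ) : ℂ) := by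
        rw [ha_def, neg_neg]
        push_cast
        field_simp
      rw [h2, Real.sqrt_eq_rpow, Complex.ofReal_cpow (by positivity)]
      norm_num
    rw [hsq, hC_def]
    have hs : (Real.sqrt (2 * π * v) : ℂ) ≠ 0 := by
      exact_mod_cast (Real.sqrt_pos.mpr (by positivity)).ne'
    rw [show ((1 / Real.sqrt (2 * π * v) : ℝ) : ℂ) * Complex.exp (-(μ^2) / (2*v)) *
        ((Real.sqrt (2 * π * v) : ℂ) * Complex.exp (0 - ((μ:ℂ)/v + (-2 * π * n) * Complex.I)^2 / (4 * a))) =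
        (((1 / Real.sqrt (2 * π * v) : ℝ) : ℂ) * (Real.sqrt (2 * π * v) : ℂ)) *
          (Complex.exp (-(μ^2) / (2*v)) * Complex.exp (0 - ((μ:ℂ)/v + (-2 * π * n) * Complex.I)^2 / (4 * a)))
        from by ring]
    rw [Complex.ofReal_div, Complex.ofReal_one, one_div, inv_mul_cancel₀ hs, one_mul,
      ← Complex.exp_add, ← Complex.exp_add]
    congr 1
    rw [ha_def]
    have hI := Complex.I_sq
    field_simp
    ring_nf
    rw [Complex.I_sq]
    ring
  rw [← hLHS, key, hRHS]
end

section
/- The wrapped centered Gaussian distribution on the circle converges weakly to the uniform distribution as the standard deviation tends to infinity: letting P σ denote the pushforward of gaussianReal 0 (σ²) under the quotient map ℝ → AddCircle 1, viewed as a probability measure on AddCircle 1, one has P σ → (uniform) Haar probability measure on AddCircle 1 in the topology of weak convergence of probability measures, as σ → ∞. -/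
/-!
On a compact space, integration against probability measures is 1-Lipschitz in the sup norm, so
the test functions along which the integrals converge form a closed subspace of `C(X, ℂ)`; weak
convergence on the circle therefore reduces to convergence of the integrals of the characters
`fourier n`, whose span is dense. For the wrapped Gaussian these integrals are values of the
Gaussian characteristic function, `exp (-2 π² n² σ²)`, and for `n ≠ 0` they tend to `0`, which is
the corresponding integral against Haar measure.
-/

open MeasureTheory ProbabilityTheory Filter Topology

/-- The wrapped centered Gaussian probability measure on the circle `ℝ/ℤ`, with standard
deviation `σ`. -/
noncomputable def wrappedGaussian (σ : ℝ) : ProbabilityMeasure (AddCircle (1 : ℝ)) :=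
  ProbabilityMeasure.map
    ⟨gaussianReal 0 (⟨σ ^ 2, sq_nonneg σ⟩ : NNReal), instIsProbabilityMeasureGaussianReal _ _⟩
    (f := fun x : ℝ => (x : AddCircle (1 : ℝ)))
    ((AddCircle.continuous_mk' 1).measurable.aemeasurable)

/-- The Haar probability measure (uniform distribution) on the circle `ℝ/ℤ`. -/
noncomputable def uniformCircle : ProbabilityMeasure (AddCircle (1 : ℝ)) :=
  ⟨(volume : Measure (AddCircle (1 : ℝ))), by
    constructor
    rw [AddCircle.measure_univ]
    simp⟩

namespace MeasureTheory

variable {X : Type*} [TopologicalSpace X] [CompactSpace X] [MeasurableSpace X]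
  [OpensMeasurableSpace X] {𝕜 : Type*} [RCLike 𝕜]

lemma integrable_continuousMap (μ : Measure X) [IsFiniteMeasure μ] (g : C(X, 𝕜)) :
    Integrable g μ :=
  (BoundedContinuousFunction.mkOfCompact g).integrable μ

lemma lipschitzWith_one_integral_continuousMap (μ : Measure X) [IsProbabilityMeasure μ] :
    LipschitzWith 1 fun g : C(X, 𝕜) ↦ ∫ x, g x ∂μ := by
  refine LipschitzWith.of_dist_le_mul fun f g ↦ ?_
  rw [NNReal.coe_one, one_mul, dist_eq_norm, dist_eq_norm,
    ← integral_sub (integrable_continuousMap μ f) (integrable_continuousMap μ g)]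
  exact (BoundedContinuousFunction.mkOfCompact (f - g)).norm_integral_le_norm μ

namespace ProbabilityMeasure

variable {ι : Type*}

variable (𝕜) in
def tendstoIntegralSubmodule (μs : ι → ProbabilityMeasure X) (l : Filter ι)
    (μ : ProbabilityMeasure X) : Submodule 𝕜 C(X, 𝕜) where
  carrier := {g | Tendsto (fun i ↦ ∫ x, g x ∂(μs i : Measure X)) l (𝓝 (∫ x, g x ∂(μ : Measure X)))}
  zero_mem' := by simpa using tendsto_const_nhds
  add_mem' {f g} hf hg := by
    simpa only [Set.mem_ofPred_eq, ContinuousMap.add_apply, integral_add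
      (integrable_continuousMap _ f) (integrable_continuousMap _ g)] using hf.add hg
  smul_mem' c g hg := by
    simpa only [Set.mem_ofPred_eq, ContinuousMap.smul_apply, integral_smul] using hg.const_smul c

lemma isClosed_tendstoIntegralSubmodule (μs : ι → ProbabilityMeasure X) (l : Filter ι)
    (μ : ProbabilityMeasure X) : IsClosed (tendstoIntegralSubmodule 𝕜 μs l μ : Set C(X, 𝕜)) :=
  Equicontinuous.isClosed_setOfPred_tendsto
    (LipschitzWith.uniformEquicontinuous _ 1
      fun i ↦ lipschitzWith_one_integral_continuousMap (μs i : Measure X)).equicontinuous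
    (lipschitzWith_one_integral_continuousMap (μ : Measure X)).continuous

theorem tendsto_of_forall_integral_tendsto_of_dense_span {μs : ι → ProbabilityMeasure X}
    {l : Filter ι} {μ : ProbabilityMeasure X} (s : Set C(X, 𝕜))
    (hs : (Submodule.span 𝕜 s).topologicalClosure = ⊤)
    (h : ∀ g ∈ s, Tendsto (fun i ↦ ∫ x, g x ∂(μs i : Measure X)) l
      (𝓝 (∫ x, g x ∂(μ : Measure X)))) :
    Tendsto μs l (𝓝 μ) := by
  have hall : tendstoIntegralSubmodule 𝕜 μs l μ = ⊤ := by
    rw [eq_top_iff, ← hs]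
    exact Submodule.topologicalClosure_minimal _ (Submodule.span_le.mpr h)
      (isClosed_tendstoIntegralSubmodule μs l μ)
  rw [tendsto_iff_forall_integral_rclike_tendsto 𝕜]
  intro f
  exact hall.ge (Submodule.mem_top (x := f.toContinuousMap))

end ProbabilityMeasure

end MeasureTheory

namespace AddCircle

open Real

variable {T : ℝ}

theorem integral_fourier_of_ne_zero [hT : Fact (0 < T)] (μ : Measure (AddCircle T))
    [μ.IsAddRightInvariant] {n : ℤ} (hn : n ≠ 0) : ∫ z, fourier n z ∂μ = 0 :=
  integral_eq_zero_of_add_right_eq_neg (fourier_add_half_inv_index hn hT.out)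

theorem integral_fourier_map_coe (μ : Measure ℝ) (n : ℤ) :
    ∫ z, fourier n z ∂(μ.map ((↑) : ℝ → AddCircle T)) = charFun μ (2 * π * n / T) := by
  rw [integral_map (φ := ((↑) : ℝ → AddCircle T))
      (AddCircle.continuous_mk' T).measurable.aemeasurable
      (map_continuous _).aestronglyMeasurable,
    charFun_apply_real]
  congr with x
  rw [fourier_coe_apply]
  push_cast
  ring_nf

end AddCircle

namespace ProbabilityTheory

open Complex

lemma norm_charFun_gaussianReal (m : ℝ) (v : NNReal) (t : ℝ) :
    ‖charFun (gaussianReal m v) t‖ = Real.exp (-(v * t ^ 2 / 2)) := by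
  rw [charFun_gaussianReal, norm_exp]
  congr 1
  simp [← ofReal_pow]

theorem tendsto_charFun_gaussianReal_of_tendsto_atTop {ι : Type*} {l : Filter ι} (m : ℝ)
    {v : ι → NNReal} (hv : Tendsto v l atTop) {t : ℝ} (ht : t ≠ 0) :
    Tendsto (fun i ↦ charFun (gaussianReal m (v i)) t) l (𝓝 0) := by
  rw [tendsto_zero_iff_norm_tendsto_zero]
  simp_rw [norm_charFun_gaussianReal]
  refine Real.tendsto_exp_atBot.comp (tendsto_neg_atTop_atBot.comp ?_)
  refine Tendsto.atTop_div_const two_pos (Tendsto.atTop_mul_const (by positivity) ?_)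
  exact NNReal.tendsto_coe_atTop.mpr hv

end ProbabilityTheory

open AddCircle in
/-- The wrapped centered Gaussian distribution on the circle converges weakly to the uniform
(Haar) distribution as the standard deviation tends to infinity. -/
theorem wrappedGaussian_tendsto_uniform :
    Tendsto wrappedGaussian atTop (𝓝 uniformCircle) := by
  have : Fact ((0 : ℝ) < 1) := ⟨one_pos⟩
  refine ProbabilityMeasure.tendsto_of_forall_integral_tendsto_of_dense_span _
    span_fourier_closure_eq_top ?_
  rintro _ ⟨n, rfl⟩
  rcases eq_or_ne n 0 with rfl | hn
  · simp
  have hvar : Tendsto (fun σ : ℝ ↦ (⟨σ ^ 2, sq_nonneg σ⟩ : NNReal)) atTop atTop :=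
    NNReal.tendsto_coe_atTop.mp (tendsto_pow_atTop two_ne_zero)
  have hfreq : 2 * Real.pi * n / 1 ≠ 0 := by simp [Real.pi_ne_zero, hn]
  have hcoeff (σ : ℝ) : ∫ z, fourier n z ∂(wrappedGaussian σ : Measure (AddCircle (1 : ℝ))) =
      charFun (gaussianReal 0 ⟨σ ^ 2, sq_nonneg σ⟩) (2 * Real.pi * n / 1) :=
    integral_fourier_map_coe _ n
  simp only [hcoeff]
  rw [uniformCircle, ProbabilityMeasure.coe_mk, integral_fourier_of_ne_zero _ hn]
  exact tendsto_charFun_gaussianReal_of_tendsto_atTop 0 hvar hfreq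
end

section
/- For real numbers μ₀, μ₁ and v₀, v₁ > 0, the Kullback–Leibler divergence between the two Gaussian measures is klDiv (gaussianReal μ₀ v₀) (gaussianReal μ₁ v₁) = ENNReal.ofReal ( (μ₀ - μ₁)²/(2 v₁) + (1/2) · (v₀/v₁ - 1 - Real.log (v₀/v₁)) ). In particular, when v₀ = v₁ = v it equals ENNReal.ofReal ((μ₀ - μ₁)²/(2v)), so minimizing the KL divergence over μ₀ is equivalent to minimizing the squared distance of the means. -/
/-!
The log-likelihood ratio of two Gaussians is the difference of their log-densities, and a
Gaussian log-density is a quadratic polynomial in `x`. Its integral against `gaussianReal μ v`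
therefore only involves the second moment `∫ (x - m)² = v + (μ - m)²`.
-/

open MeasureTheory ProbabilityTheory
open scoped Classical

/-- Kullback–Leibler divergence between two measures, valued in `ℝ≥0∞`:
`∫ log (dμ/dν) dμ` if `μ ≪ ν` and the log-likelihood ratio is `μ`-integrable, `∞` otherwise. -/
noncomputable def klDiv {α : Type*} [MeasurableSpace α] (μ ν : Measure α) : ENNReal :=
  if μ ≪ ν ∧ Integrable (llr μ ν) μ then ENNReal.ofReal (∫ x, llr μ ν x ∂μ) else ⊤

open Real
open scoped NNReal

namespace ProbabilityTheory

variable {μ : ℝ} {v : ℝ≥0}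

lemma integral_sq_gaussianReal : ∫ x, x ^ 2 ∂gaussianReal μ v = v + μ ^ 2 := by
  have h := variance_eq_sub (memLp_id_gaussianReal (μ := μ) (v := v) 2)
  simp only [variance_id_gaussianReal, Pi.pow_apply, id_eq, integral_id_gaussianReal] at h
  linarith

lemma integral_sq_sub_gaussianReal (m : ℝ) :
    ∫ x, (x - m) ^ 2 ∂gaussianReal μ v = v + (μ - m) ^ 2 := by
  rw [← integral_sq_gaussianReal, ← gaussianReal_map_sub_const,
    integral_map (by fun_prop) (by fun_prop)]

lemma integrable_sq_sub_gaussianReal (m : ℝ) :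
    Integrable (fun x ↦ (x - m) ^ 2) (gaussianReal μ v) :=
  ((memLp_id_gaussianReal 2).sub (memLp_const m)).integrable_sq

lemma log_gaussianPDFReal (m : ℝ) (hv : v ≠ 0) (x : ℝ) :
    log (gaussianPDFReal m v x) = -log (2 * π * v) / 2 - (x - m) ^ 2 / (2 * v) := by
  rw [gaussianPDFReal, log_mul (by positivity) (exp_ne_zero _), log_inv, log_exp,
    log_sqrt (by positivity)]
  ring

lemma integrable_log_gaussianPDFReal (m : ℝ) {w : ℝ≥0} (hw : w ≠ 0) :
    Integrable (fun x ↦ log (gaussianPDFReal m w x)) (gaussianReal μ v) := by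
  simp_rw [log_gaussianPDFReal m hw]
  exact (integrable_const _).sub ((integrable_sq_sub_gaussianReal m).div_const _)

lemma integral_log_gaussianPDFReal (m : ℝ) {w : ℝ≥0} (hw : w ≠ 0) :
    ∫ x, log (gaussianPDFReal m w x) ∂gaussianReal μ v
      = -log (2 * π * w) / 2 - (v + (μ - m) ^ 2) / (2 * w) := by
  simp_rw [log_gaussianPDFReal m hw]
  rw [integral_sub (integrable_const _) ((integrable_sq_sub_gaussianReal m).div_const _),
    integral_const, integral_div, integral_sq_sub_gaussianReal]
  simp

variable {μ₀ μ₁ : ℝ} {v₀ v₁ : ℝ≥0}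

lemma llr_gaussianReal_ae_eq (hv₀ : v₀ ≠ 0) (hv₁ : v₁ ≠ 0) :
    llr (gaussianReal μ₀ v₀) (gaussianReal μ₁ v₁) =ᵐ[gaussianReal μ₀ v₀]
      fun x ↦ log (gaussianPDFReal μ₀ v₀ x) - log (gaussianPDFReal μ₁ v₁ x) := by
  have h₀ := gaussianReal_absolutelyContinuous μ₀ hv₀
  have h₁ := gaussianReal_absolutelyContinuous μ₁ hv₁
  filter_upwards [(h₀.trans (gaussianReal_absolutelyContinuous' μ₁ hv₁))
      (Measure.rnDeriv_eq_div h₀ h₁), h₀ (rnDeriv_gaussianReal μ₀ v₀),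
      h₀ (rnDeriv_gaussianReal μ₁ v₁)] with x hdiv hpdf₀ hpdf₁
  rw [llr, hdiv, hpdf₀, hpdf₁, ENNReal.toReal_div, toReal_gaussianPDF, toReal_gaussianPDF,
    log_div (gaussianPDFReal_pos _ _ _ hv₀).ne' (gaussianPDFReal_pos _ _ _ hv₁).ne']

lemma integrable_llr_gaussianReal (hv₀ : v₀ ≠ 0) (hv₁ : v₁ ≠ 0) :
    Integrable (llr (gaussianReal μ₀ v₀) (gaussianReal μ₁ v₁)) (gaussianReal μ₀ v₀) :=
  ((integrable_log_gaussianPDFReal μ₀ hv₀).sub (integrable_log_gaussianPDFReal μ₁ hv₁)).congr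
    (llr_gaussianReal_ae_eq hv₀ hv₁).symm

lemma integral_llr_gaussianReal (hv₀ : v₀ ≠ 0) (hv₁ : v₁ ≠ 0) :
    ∫ x, llr (gaussianReal μ₀ v₀) (gaussianReal μ₁ v₁) x ∂gaussianReal μ₀ v₀
      = (μ₀ - μ₁) ^ 2 / (2 * v₁) + 1 / 2 * (v₀ / v₁ - 1 - log (v₀ / v₁)) := by
  have hv₀' : (v₀ : ℝ) ≠ 0 := NNReal.coe_ne_zero.mpr hv₀
  have hv₁' : (v₁ : ℝ) ≠ 0 := NNReal.coe_ne_zero.mpr hv₁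
  rw [integral_congr_ae (llr_gaussianReal_ae_eq hv₀ hv₁),
    integral_sub (integrable_log_gaussianPDFReal μ₀ hv₀) (integrable_log_gaussianPDFReal μ₁ hv₁),
    integral_log_gaussianPDFReal μ₀ hv₀, integral_log_gaussianPDFReal μ₁ hv₁,
    log_div hv₀' hv₁', log_mul (by positivity) hv₀', log_mul (by positivity) hv₁']
  field_simp
  ring

end ProbabilityTheory

lemma klDiv_gaussianReal_of_ne_zero (μ₀ μ₁ : ℝ) {v₀ v₁ : ℝ≥0} (hv₀ : v₀ ≠ 0) (hv₁ : v₁ ≠ 0) :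
    klDiv (gaussianReal μ₀ v₀) (gaussianReal μ₁ v₁)
      = ENNReal.ofReal ((μ₀ - μ₁) ^ 2 / (2 * v₁) + 1 / 2 * (v₀ / v₁ - 1 - log (v₀ / v₁))) := by
  have hac := (gaussianReal_absolutelyContinuous μ₀ hv₀).trans
    (gaussianReal_absolutelyContinuous' μ₁ hv₁)
  rw [klDiv, if_pos ⟨hac, integrable_llr_gaussianReal hv₀ hv₁⟩,
    integral_llr_gaussianReal hv₀ hv₁]

/-- The Kullback–Leibler divergence between two Gaussian measures, with the equal-variance
special case: minimizing KL over the first mean amounts to minimizing the squared distance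
of the means. -/
theorem klDiv_gaussianReal (μ₀ μ₁ v₀ v₁ : ℝ) (hv₀ : 0 < v₀) (hv₁ : 0 < v₁) :
    klDiv (gaussianReal μ₀ ⟨v₀, hv₀.le⟩) (gaussianReal μ₁ ⟨v₁, hv₁.le⟩)
      = ENNReal.ofReal ((μ₀ - μ₁) ^ 2 / (2 * v₁)
          + (1 / 2) * (v₀ / v₁ - 1 - Real.log (v₀ / v₁)))
    ∧ (v₀ = v₁ →
        klDiv (gaussianReal μ₀ ⟨v₀, hv₀.le⟩) (gaussianReal μ₁ ⟨v₁, hv₁.le⟩)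
          = ENNReal.ofReal ((μ₀ - μ₁) ^ 2 / (2 * v₁))) := by
  have hkl : klDiv (gaussianReal μ₀ ⟨v₀, hv₀.le⟩) (gaussianReal μ₁ ⟨v₁, hv₁.le⟩)
      = ENNReal.ofReal ((μ₀ - μ₁) ^ 2 / (2 * v₁) + 1 / 2 * (v₀ / v₁ - 1 - log (v₀ / v₁))) :=
    klDiv_gaussianReal_of_ne_zero μ₀ μ₁ (NNReal.coe_ne_zero.mp hv₀.ne')
      (NNReal.coe_ne_zero.mp hv₁.ne')
  refine ⟨hkl, fun h ↦ ?_⟩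
  rw [hkl, h, div_self hv₁.ne', log_one]
  norm_num
end

section
/- Let β : ℕ → ℝ satisfy 0 < β t < 1 for all t, let x₀ : ℝ, and define ᾱ t = ∏_{s ∈ Finset.range t} (1 - β s). Define probability measures on ℝ recursively by P 0 = Measure.dirac x₀ and P (t+1) = Measure.map (fun p : ℝ × ℝ => Real.sqrt (1 - β t) * p.1 + Real.sqrt (β t) * p.2) ((P t).prod (gaussianReal 0 1)). Then for every t, P t = gaussianReal (Real.sqrt (ᾱ t) * x₀) (1 - ᾱ t); i.e., the forward diffusion process started at x₀ has the closed-form marginal q(x_t | x_0) = N(√(ᾱ_t) x₀, (1 - ᾱ_t)). -/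
open MeasureTheory ProbabilityTheory
open scoped NNReal

/-! If `X ~ N(m, v)` and `ε ~ N(0, 1)` are independent, then `a X + b ε ~ N(a m, a² v + b²)`: the
law of `a X + b ε` is the convolution of the laws of `a X` and `b ε`, and Gaussians are closed
under convolution. One noising step thus sends `N(√ᾱ x₀, 1 - ᾱ)` to
`N(√(ᾱ (1 - β)) x₀, (1 - β)(1 - ᾱ) + β) = N(√(ᾱ (1 - β)) x₀, 1 - ᾱ (1 - β))`, and induction on `t`
gives the marginals. -/

theorem MeasureTheory.Measure.map_add_prod_eq_conv_map {M : Type*} [AddMonoid M]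
    [MeasurableSpace M] [MeasurableAdd₂ M] {μ ν : Measure M} [SFinite μ] [SFinite ν] {f g : M → M}
    (hf : Measurable f) (hg : Measurable g) :
    (μ.prod ν).map (fun p => f p.1 + g p.2) = μ.map f ∗ ν.map g := by
  rw [Measure.conv, Measure.map_prod_map _ _ hf hg, Measure.map_map measurable_add (hf.prodMap hg)]
  rfl

theorem gaussianReal_prod_map_linear (a b m₁ m₂ : ℝ) (v₁ v₂ : ℝ≥0) :
    ((gaussianReal m₁ v₁).prod (gaussianReal m₂ v₂)).map (fun p : ℝ × ℝ => a * p.1 + b * p.2) =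
      gaussianReal (a * m₁ + b * m₂)
        (.mk (a ^ 2) (sq_nonneg a) * v₁ + .mk (b ^ 2) (sq_nonneg b) * v₂) := by
  rw [Measure.map_add_prod_eq_conv_map (measurable_const_mul a) (measurable_const_mul b),
    gaussianReal_map_const_mul, gaussianReal_map_const_mul, gaussianReal_conv_gaussianReal]

theorem gaussianReal_prod_map_diffusionStep {A b : ℝ} (hA : A ≤ 1) (hb₀ : 0 ≤ b) (hb₁ : b ≤ 1)
    (x : ℝ) :
    ((gaussianReal (√A * x) (1 - A).toNNReal).prod (gaussianReal 0 1)).map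
        (fun p : ℝ × ℝ => √(1 - b) * p.1 + √b * p.2) =
      gaussianReal (√(A * (1 - b)) * x) (1 - A * (1 - b)).toNNReal := by
  rw [gaussianReal_prod_map_linear]
  congr 1
  · rw [mul_zero, add_zero, ← mul_assoc, ← Real.sqrt_mul (sub_nonneg.2 hb₁), mul_comm (1 - b)]
  · ext
    rw [NNReal.coe_add, NNReal.coe_mul, NNReal.coe_mul, NNReal.coe_mk, NNReal.coe_mk,
      Real.sq_sqrt (sub_nonneg.2 hb₁), Real.sq_sqrt hb₀, Real.coe_toNNReal _ (sub_nonneg.2 hA),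
      Real.coe_toNNReal _ (by nlinarith), NNReal.coe_one]
    ring

/-- The forward diffusion (noising) process `x_t = √(1-β_t) x_{t-1} + √(β_t) ε`,
`ε ~ N(0,1)`, started at `x₀`, has closed-form marginals
`q(x_t | x₀) = N(√(ᾱ_t) x₀, 1 - ᾱ_t)` where `ᾱ_t = ∏_{s<t} (1 - β_s)`. -/
theorem forward_diffusion_marginal (β : ℕ → ℝ) (hβ : ∀ t, 0 < β t ∧ β t < 1) (x₀ : ℝ)
    (P : ℕ → Measure ℝ)
    (hP0 : P 0 = Measure.dirac x₀)
    (hPs : ∀ t, P (t + 1) = Measure.map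
        (fun p : ℝ × ℝ => Real.sqrt (1 - β t) * p.1 + Real.sqrt (β t) * p.2)
        ((P t).prod (gaussianReal 0 1)))
    (t : ℕ) :
    P t = gaussianReal (Real.sqrt (∏ s ∈ Finset.range t, (1 - β s)) * x₀)
        (1 - ∏ s ∈ Finset.range t, (1 - β s)).toNNReal := by
  induction t with
  | zero => simp [hP0, gaussianReal_zero_var]
  | succ t ih =>
    have hβ₀ (s : ℕ) : 0 ≤ β s := (hβ s).1.le
    have hβ₁ (s : ℕ) : β s ≤ 1 := (hβ s).2.le
    have hᾱ : ∏ s ∈ Finset.range t, (1 - β s) ≤ 1 :=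
      Finset.prod_le_one (fun s _ => sub_nonneg.2 (hβ₁ s)) fun s _ => sub_le_self 1 (hβ₀ s)
    rw [hPs, ih, gaussianReal_prod_map_diffusionStep hᾱ (hβ₀ t) (hβ₁ t), Finset.prod_range_succ]
end

section
/- Fix reals x₀, x_t, x, a variance level β ∈ (0,1), and ᾱ' ∈ (0,1) (the cumulative product up to step t-1), and set α = 1 - β and ᾱ = ᾱ' · α. Define the posterior mean μ̃ = (√(ᾱ') · β)/(1 - ᾱ) · x₀ + (√α · (1 - ᾱ'))/(1 - ᾱ) · x_t and posterior variance β̃ = ((1 - ᾱ')/(1 - ᾱ)) · β. Then the Gaussian densities satisfy the Bayes identity: gaussianPDFReal (√α · y) β x_t · gaussianPDFReal (√(ᾱ') · x₀) (1 - ᾱ') y = gaussianPDFReal μ̃ β̃ y · gaussianPDFReal (√(ᾱ) · x₀) (1 - ᾱ) x_t for every y : ℝ. -/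
open MeasureTheory ProbabilityTheory

set_option maxHeartbeats 1000000 in
/-- Bayes identity for the DDPM diffusion posterior. -/
theorem diffusion_posterior_gaussian (x₀ xt : ℝ) (β ᾱ' : ℝ)
    (hβ : β ∈ Set.Ioo (0 : ℝ) 1) (hᾱ' : ᾱ' ∈ Set.Ioo (0 : ℝ) 1) (y : ℝ) :
    gaussianPDFReal (Real.sqrt (1 - β) * y) β.toNNReal xt
      * gaussianPDFReal (Real.sqrt ᾱ' * x₀) (1 - ᾱ').toNNReal y
    = gaussianPDFReal
        ((Real.sqrt ᾱ' * β) / (1 - ᾱ' * (1 - β)) * x₀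
          + (Real.sqrt (1 - β) * (1 - ᾱ')) / (1 - ᾱ' * (1 - β)) * xt)
        ((1 - ᾱ') / (1 - ᾱ' * (1 - β)) * β).toNNReal y
      * gaussianPDFReal (Real.sqrt (ᾱ' * (1 - β)) * x₀) (1 - ᾱ' * (1 - β)).toNNReal xt := by
  obtain ⟨hβ0, hβ1⟩ := hβ
  obtain ⟨hα0, hα1⟩ := hᾱ'
  obtain ⟨a, ha0, rfl⟩ : ∃ a, 0 ≤ a ∧ β = 1 - a ^ 2 :=
    ⟨Real.sqrt (1 - β), Real.sqrt_nonneg _, by rw [Real.sq_sqrt (by linarith)]; ring⟩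
  obtain ⟨b, hb0, rfl⟩ : ∃ b, 0 ≤ b ∧ ᾱ' = b ^ 2 :=
    ⟨Real.sqrt ᾱ', Real.sqrt_nonneg _, (Real.sq_sqrt hα0.le).symm⟩
  have ha1 : a < 1 := by nlinarith
  have hapos : 0 < a := by nlinarith
  have hb1 : b < 1 := by nlinarith
  have hab : b * a < 1 := by nlinarith
  have hbpos : 0 < b := by nlinarith
  have habpos : 0 < b * a := by positivity
  have e1 : Real.sqrt (1 - (1 - a ^ 2)) = a := by
    rw [show 1 - (1 - a ^ 2) = a ^ 2 by ring, Real.sqrt_sq ha0]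
  have e2 : Real.sqrt (b ^ 2) = b := Real.sqrt_sq hb0
  have e3 : Real.sqrt (b ^ 2 * (1 - (1 - a ^ 2))) = b * a := by
    rw [show b ^ 2 * (1 - (1 - a ^ 2)) = (b * a) ^ 2 by ring, Real.sqrt_sq (by positivity)]
  rw [e1, e2, e3]
  have hv1 : (0:ℝ) < 1 - a ^ 2 := by nlinarith
  have hv2 : (0:ℝ) < 1 - b ^ 2 := by nlinarith
  have hv3 : (0:ℝ) < 1 - b ^ 2 * (1 - (1 - a ^ 2)) := by nlinarith
  have hv4 : (0:ℝ) < (1 - b ^ 2) / (1 - b ^ 2 * (1 - (1 - a ^ 2))) * (1 - a ^ 2) := by positivity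
  simp only [gaussianPDFReal, Real.coe_toNNReal _ hv1.le, Real.coe_toNNReal _ hv2.le,
    Real.coe_toNNReal _ hv3.le, Real.coe_toNNReal _ hv4.le]
  rw [mul_mul_mul_comm, ← Real.exp_add]
  conv_rhs => rw [mul_mul_mul_comm, ← Real.exp_add]
  have hv3' : (1:ℝ) - b ^ 2 * (1 - (1 - a ^ 2)) ≠ 0 := hv3.ne'
  have hv1' : (1:ℝ) - a ^ 2 ≠ 0 := hv1.ne'
  have hv2' : (1:ℝ) - b ^ 2 ≠ 0 := hv2.ne'
  have hv5 : (1:ℝ) - a ^ 2 * b ^ 2 ≠ 0 := by intro h; apply hv3'; linarith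
  have hv6 : (1:ℝ) - b ^ 2 * a ^ 2 ≠ 0 := by intro h; apply hv3'; linarith
  congr 1
  · rw [← mul_inv, ← mul_inv, ← Real.sqrt_mul (by positivity), ← Real.sqrt_mul (by positivity)]
    congr 1
    congr 1
    field_simp
  · congr 1
    field_simp
    ring
end

section
/- Let p : ℝ → ℝ≥0∞ be measurable and let P = volume.withDensity p be the corresponding measure on ℝ. Then for every measurable set s ⊆ [0,1), the pushforward of P under the quotient map ℝ → AddCircle 1 satisfies (Measure.map (fun x : ℝ => (x : AddCircle 1)) P) ((fun x : ℝ => (x : AddCircle 1)) '' s) = ∫⁻_{x ∈ s} ∑_{τ : ℤ} p (x + τ) ∂volume; i.e., the wrapped measure on the torus has density x ↦ ∑_{τ ∈ ℤ} p(x + τ) on the fundamental domain [0,1). -/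
open MeasureTheory

/-- The measure `P = p · λ` on `ℝ`, wrapped onto the circle `ℝ/ℤ`, has density
`x ↦ ∑_{τ ∈ ℤ} p (x + τ)` on the fundamental domain `[0,1)`. -/
theorem wrapped_measure_density (p : ℝ → ENNReal) (hp : Measurable p)
    (s : Set ℝ) (hs : MeasurableSet s) (hsub : s ⊆ Set.Ico (0 : ℝ) 1) :
    (Measure.map (fun x : ℝ => (x : AddCircle (1 : ℝ))) (volume.withDensity p))
        ((fun x : ℝ => (x : AddCircle (1 : ℝ))) '' s)
    = ∫⁻ x in s, ∑' τ : ℤ, p (x + τ) := by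
  have hfact : Fact ((0:ℝ) < 1) := ⟨one_pos⟩
  -- measurability of the image on the circle
  have himg : MeasurableSet ((fun x : ℝ => (x : AddCircle (1:ℝ))) '' s) := by
    have heq : (fun x : ℝ => (x : AddCircle (1:ℝ))) '' s
        = (AddCircle.measurableEquivIco (T := 1) 0) ⁻¹' (Subtype.val ⁻¹' s) := by
      ext z
      simp only [Set.mem_image, Set.mem_preimage]
      constructor
      · rintro ⟨x, hxs, rfl⟩
        have hx : x ∈ Set.Ico (0:ℝ) (0+1) := by simpa using hsub hxs
        have h1 : AddCircle.equivIco (1:ℝ) 0 ((x : AddCircle (1:ℝ))) = ⟨x, hx⟩ := by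
          rw [Equiv.apply_eq_iff_eq_symm_apply]; rfl
        show ((AddCircle.equivIco (1:ℝ) 0 ((x : AddCircle (1:ℝ))) : _) : ℝ) ∈ s
        rw [h1]
        exact hxs
      · intro hz
        refine ⟨((AddCircle.equivIco (1:ℝ) 0 z : _) : ℝ), hz, ?_⟩
        exact (AddCircle.equivIco (1:ℝ) 0).symm_apply_apply z
    rw [heq]
    exact (AddCircle.measurableEquivIco (T := 1) 0).measurable
      (hs.preimage measurable_subtype_coe)
  rw [Measure.map_apply AddCircle.measurable_mk' himg]
  -- the preimage of the image is the disjoint union of integer translates of `s`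
  have hpre : (fun x : ℝ => (x : AddCircle (1:ℝ))) ⁻¹'
      ((fun x : ℝ => (x : AddCircle (1:ℝ))) '' s)
      = ⋃ n : ℤ, (fun x : ℝ => x - (n : ℝ)) ⁻¹' s := by
    ext x
    simp only [Set.mem_preimage, Set.mem_image, Set.mem_iUnion]
    constructor
    · rintro ⟨y, hy, hxy⟩
      rw [QuotientAddGroup.eq] at hxy
      obtain ⟨k, hk⟩ := AddSubgroup.mem_zmultiples_iff.mp hxy
      refine ⟨k, ?_⟩
      have : (k : ℝ) = -y + x := by simpa [zsmul_eq_mul] using hk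
      have hx : x - (k : ℝ) = y := by linarith
      rwa [hx]
    · rintro ⟨n, hn⟩
      refine ⟨x - n, hn, ?_⟩
      rw [QuotientAddGroup.eq]
      exact AddSubgroup.mem_zmultiples_iff.mpr ⟨n, by push_cast [zsmul_eq_mul]; ring⟩
  rw [hpre]
  have hmeas : ∀ n : ℤ, MeasurableSet ((fun x : ℝ => x - (n : ℝ)) ⁻¹' s) :=
    fun n => hs.preimage (measurable_id.sub_const _)
  have hdisj : Pairwise (Function.onFun Disjoint
      fun n : ℤ => (fun x : ℝ => x - (n : ℝ)) ⁻¹' s) := by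
    intro n m hnm
    rw [Function.onFun, Set.disjoint_left]
    intro x hxn hxm
    have h1 := hsub hxn
    have h2 := hsub hxm
    simp only [Set.mem_preimage, Set.mem_Ico] at h1 h2
    have : (n : ℝ) = (m : ℝ) := by
      have l1 : (n : ℝ) - m < 1 := by linarith [h1.1, h1.2, h2.1, h2.2]
      have l2 : (m : ℝ) - n < 1 := by linarith [h1.1, h1.2, h2.1, h2.2]
      have l1' : (n : ℤ) - m < 1 := by exact_mod_cast (by linarith : (n:ℝ) - m < 1)
      have l2' : (m : ℤ) - n < 1 := by exact_mod_cast l2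
      have : n = m := by omega
      exact_mod_cast congrArg (Int.cast : ℤ → ℝ) this
    exact hnm (by exact_mod_cast this)
  rw [measure_iUnion hdisj hmeas]
  -- compute each translate's measure by change of variables
  have hterm : ∀ n : ℤ, (volume.withDensity p) ((fun x : ℝ => x - (n : ℝ)) ⁻¹' s)
      = ∫⁻ y in s, p (y + (n : ℝ)) := by
    intro n
    rw [withDensity_apply _ (hmeas n)]
    have hmp : MeasurePreserving (fun x : ℝ => x - (n : ℝ)) volume volume := by
      have := measurePreserving_add_right (volume : Measure ℝ) (-(n : ℝ))
      simpa [sub_eq_add_neg] using this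
    have hemb : MeasurableEmbedding (fun x : ℝ => x - (n : ℝ)) := by
      have := (MeasurableEquiv.addRight (-(n : ℝ))).measurableEmbedding
      simpa [sub_eq_add_neg, MeasurableEquiv.addRight] using this
    have := hmp.setLIntegral_comp_preimage_emb hemb (fun y => p (y + (n : ℝ))) s
    simpa [sub_add_cancel] using this
  simp_rw [hterm]
  exact (lintegral_tsum (μ := volume.restrict s) (f := fun (n : ℤ) (y : ℝ) => p (y + n))
    (fun n => (hp.comp (measurable_add_const _)).aemeasurable)).symm
end
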